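/- Under the stated assumptions, for every a ∈ (0, 1/2) the following holds for all sufficiently large N: if for each I ∈ 𝓘^N the interval I is partitioned into consecutive subintervals J_1^I, …, J_{r_I}^I with summ(J_k^I) ≤ 1/2 for every k, and with #{(n,n') ∈ J_k^I × J_{k+1}^I : g_n + ⋯ + g_{n'} > 1/2} ≥ (1/2)·min(|J_k^I|, |J_{k+1}^I|)² for every 1 ≤ k ≤ r_I − 1, then ∑_{I ∈ 𝓘^N} ∑_{k=1}^{r_I − 1} PPC^{J_k^I, J_{k+1}^I}(0, a) ≤ 2√2 · ε^{1/4} · (∑_{I ∈ 𝓘^N} ∑_{k=1}^{r_I} |J_k^I|²)^{1/2} · √N. -/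

import Mathlib

/-!
Bound `PPC^{J,J'}(0,a)` by `|J| |J'| = min · max` and apply Cauchy–Schwarz: since
`∑ max(|J_k|, |J_{k+1}|)² ≤ 2 ∑ |J_k|²`, it suffices that `∑ min(|J_k|, |J_{k+1}|)² ≤ 4 √ε N`.
By hypothesis each `min²` is at most twice the number of pairs `(n, n') ∈ J_k × J_{k+1}` whose
window `g_n + ⋯ + g_{n'}` exceeds `1/2`; as `summ J_k, summ J_{k+1} ≤ 1/2`, these are distinct
windows of at least two gaps with total length in `(1/2, 1]`. By PPC at most about `N/2` pairs
lie at distance in `(1/2, 1]` and at most about `N/2` gaps exceed `1`, so at least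
`N/2 − S − O(εN)` of those pairs are single gaps, `S` being the number of gaps `≤ 1/2`; this
leaves at most `S + O(εN)` longer windows. Finally `S = O(√ε N)`: the gaps average `1`, are at
most `3/2 + ε`, and by PPC at most `(1 + ε − s) N` of them exceed `1/2 + s`; a discretised
layer-cake estimate turns this into `S² ≤ 2.6 ε N² + O(N)`.
-/

open Finset Filter

open scoped Classical in
/-- The collection `𝓘^N` of maximal subintervals of `{1,…,N}` on which the gaps `g n` are at
most `1/2`, encoded as the set of pairs `(p, q)` of endpoints, `1 ≤ p ≤ q ≤ N`. -/
noncomputable def maximalIntervals (g : ℕ → ℝ) (N : ℕ) : Finset (ℕ × ℕ) :=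
  (Finset.Icc 1 N ×ˢ Finset.Icc 1 N).filter fun pq =>
    pq.1 ≤ pq.2 ∧ (∀ n ∈ Finset.Icc pq.1 pq.2, g n ≤ 1 / 2) ∧
      (pq.1 = 1 ∨ 1 / 2 < g (pq.1 - 1)) ∧ (pq.2 = N ∨ 1 / 2 < g (pq.2 + 1))

open scoped Classical

lemma le_add_mul_card_filter_lt {x c h : ℝ} (hh : 0 < h) {K : ℕ} (hx : x ≤ c + K * h) :
    x ≤ c + h * #{t ∈ range K | c + (t : ℕ) * h < x} := by
  set m := #{t ∈ range K | c + (t : ℕ) * h < x}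
  by_contra! hlt
  have hsub : range (min K (m + 1)) ⊆ {t ∈ range K | c + (t : ℕ) * h < x} := by
    intro t ht
    rw [mem_range, lt_min_iff, Nat.lt_succ_iff] at ht
    refine mem_filter.2 ⟨mem_range.2 ht.1, lt_of_le_of_lt ?_ hlt⟩
    rw [mul_comm h]
    gcongr
    exact_mod_cast ht.2
  have hKm : (K : ℝ) ≤ m := by
    have := card_le_card hsub
    rw [card_range] at this
    exact_mod_cast (by omega : K ≤ m)
  nlinarith

lemma sum_le_card_mul_add_sum_card_filter_lt {ι : Type*} (s : Finset ι) (x : ι → ℝ)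
    {c h : ℝ} (hh : 0 < h) {K : ℕ} (hx : ∀ n ∈ s, x n ≤ c + K * h) :
    ∑ n ∈ s, x n ≤ #s * c + h * ∑ t ∈ range K, (#{n ∈ s | c + (t : ℕ) * h < x n} : ℝ) := by
  calc ∑ n ∈ s, x n ≤ ∑ n ∈ s, (c + h * #{t ∈ range K | c + (t : ℕ) * h < x n}) :=
        sum_le_sum fun n hn => le_add_mul_card_filter_lt hh (hx n hn)
    _ = #s * c + h * ∑ t ∈ range K, (#{n ∈ s | c + (t : ℕ) * h < x n} : ℝ) := by
        simp only [sum_add_distrib, sum_const, nsmul_eq_mul, ← mul_sum, card_filter,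
          Nat.cast_sum]
        rw [sum_comm]

lemma mul_sum_range_le_of_le_min {K : ℕ} {B C V : ℝ} {f : ℕ → ℝ} (hB : 0 < B)
    (hV : 0 ≤ V) (hVC : V ≤ C + B) (hf : ∀ t < K, f t ≤ min V (max (C - t * B) 0)) :
    B * ∑ t ∈ range K, f t ≤ V * (C + B) - V ^ 2 / 2 := by
  -- `Ψ` is a convex primitive of `y ↦ min V (max y 0)`, so each term is bounded by an
  -- increment of `Ψ`, and the increments telescope.
  set Ψ : ℝ → ℝ := fun y => max y 0 ^ 2 / 2 - max (y - V) 0 ^ 2 / 2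
  have step (y : ℝ) : B * min V (max y 0) ≤ Ψ (y + B) - Ψ y := by
    simp only [Ψ, max_def, min_def]
    split_ifs <;> nlinarith
  have hΨ_nonneg (y : ℝ) : 0 ≤ Ψ y := by
    have : max (y - V) 0 ≤ max y 0 := max_le_max (by linarith) le_rfl
    have : 0 ≤ max (y - V) 0 := le_max_right _ _
    simp only [Ψ]; nlinarith
  have hΨ : Ψ (C + B) = V * (C + B) - V ^ 2 / 2 := by
    simp only [Ψ, max_eq_left (show 0 ≤ C + B by linarith), max_eq_left (sub_nonneg.2 hVC)]
    ring
  set G : ℕ → ℝ := fun t => Ψ (C + B - t * B)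
  calc B * ∑ t ∈ range K, f t ≤ ∑ t ∈ range K, (G t - G (t + 1)) := by
        rw [mul_sum]
        refine sum_le_sum fun t ht => ?_
        calc B * f t ≤ B * min V (max (C - t * B) 0) :=
              mul_le_mul_of_nonneg_left (hf t (mem_range.1 ht)) hB.le
          _ ≤ Ψ (C - t * B + B) - Ψ (C - t * B) := step _
          _ = G t - G (t + 1) := by simp only [G]; push_cast; ring_nf
    _ = Ψ (C + B) - G K := by rw [sum_range_sub']; simp [G]
    _ ≤ V * (C + B) - V ^ 2 / 2 := by linarith [hΨ_nonneg (C + B - K * B)]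

lemma sq_card_filter_le_half_le_of_le_sum {ι : Type*} (s : Finset ι) (x : ι → ℝ) {ε h M : ℝ}
    (hε : 0 ≤ ε) (hh : 0 < h) (hM : 0 < M) (hsM : #s ≤ M) (hx : ∀ n ∈ s, x n ≤ 3 / 2 + ε)
    (hsum : (1 - h) * #s ≤ ∑ n ∈ s, x n)
    (htail : ∀ t : ℕ, t * h ≤ 1 + ε →
      #{n ∈ s | 1 / 2 + t * h < x n} ≤ (1 + ε + h - t * h) * M) :
    (#{n ∈ s | x n ≤ 1 / 2} : ℝ) ^ 2 ≤ (2 * ε + 6 * h) * M * #s + (M - #s) * #s := by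
  set K := ⌈(1 + ε) / h⌉₊
  have hK : 1 + ε ≤ K * h := (div_le_iff₀ hh).1 (Nat.le_ceil _)
  set F : ℕ → ℝ := fun t => ((#{n ∈ s | 1 / 2 + (t : ℕ) * h < x n} : ℕ) : ℝ)
  set V : ℝ := ((#{n ∈ s | 1 / 2 < x n} : ℕ) : ℝ)
  set S : ℝ := ((#{n ∈ s | x n ≤ 1 / 2} : ℕ) : ℝ)
  have hVS : V + S = #s := by
    simp only [V, S, ← not_le]
    rw [add_comm]
    exact_mod_cast card_filter_add_card_filter_not _
  have hlayer : ∑ n ∈ s, x n ≤ #s * (1 / 2) + h * ∑ t ∈ range K, F t :=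
    sum_le_card_mul_add_sum_card_filter_lt s x hh fun n hn => by linarith [hx n hn]
  have hF (t : ℕ) (_ : t < K) : F t ≤ min V (max ((1 + ε + h) * M - t * (h * M)) 0) := by
    refine le_min ?_ ?_
    · refine Nat.cast_le.2 (card_le_card (monotone_filter_right _ fun n _ hn => ?_))
      have : (0 : ℝ) ≤ t * h := by positivity
      linarith
    · by_cases ht : t * h ≤ 1 + ε
      · exact (htail t ht).trans (le_of_eq_of_le (by ring) (le_max_left _ _))
      · have : F t = 0 := by
          simp only [F, Nat.cast_eq_zero, card_eq_zero, filter_eq_empty_iff, not_lt]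
          intro n hn
          linarith [hx n hn]
        exact this.le.trans (le_max_right _ _)
  have hV0 : 0 ≤ V := Nat.cast_nonneg _
  have hS0 : 0 ≤ S := Nat.cast_nonneg _
  -- Layer cake: `∑ x ≤ #s/2 + h ∑ F t`, and the triangle bound `hF` on the tail counts makes
  -- `h ∑ F t ≤ V (1 + ε + 2h) - V²/(2M)`, which is small unless `V` is close to `#s`.
  have htriangle := mul_sum_range_le_of_le_min (mul_pos hh hM) hV0 (by nlinarith) hF
  have key : M * ((1 - h) * #s) ≤ M * (#s / 2) + M * V * (1 + ε + 2 * h) - V ^ 2 / 2 := by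
    nlinarith
  rw [← hVS] at hsM key ⊢
  nlinarith [mul_nonneg hS0 (sub_nonneg.2 hsM),
    mul_nonneg (mul_nonneg hM.le hS0) (by positivity : 0 ≤ ε + 2 * h)]

lemma sum_sq_max_succ_le (a : ℕ → ℝ) (r : ℕ) :
    ∑ k ∈ Icc 1 (r - 1), max (a k) (a (k + 1)) ^ 2 ≤ 2 * ∑ k ∈ Icc 1 r, a k ^ 2 := by
  have hshift : ∑ k ∈ Icc 1 (r - 1), a (k + 1) ^ 2 ≤ ∑ k ∈ Icc 1 r, a k ^ 2 := by
    rw [← sum_image (f := fun k => a k ^ 2) (g := (· + 1)) fun _ _ _ _ => Nat.add_right_cancel]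
    refine sum_le_sum_of_subset_of_nonneg (fun k hk => ?_) fun _ _ _ => sq_nonneg _
    obtain ⟨j, hj, rfl⟩ := mem_image.1 hk
    rw [mem_Icc] at hj ⊢
    omega
  have hle : ∑ k ∈ Icc 1 (r - 1), a k ^ 2 ≤ ∑ k ∈ Icc 1 r, a k ^ 2 :=
    sum_le_sum_of_subset_of_nonneg (Icc_subset_Icc_right (r.sub_le 1)) fun _ _ _ => sq_nonneg _
  calc ∑ k ∈ Icc 1 (r - 1), max (a k) (a (k + 1)) ^ 2
      ≤ ∑ k ∈ Icc 1 (r - 1), (a k ^ 2 + a (k + 1) ^ 2) := by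
        refine sum_le_sum fun k _ => ?_
        rcases le_total (a k) (a (k + 1)) with h | h
        · rw [max_eq_right h]; nlinarith
        · rw [max_eq_left h]; nlinarith
    _ ≤ 2 * ∑ k ∈ Icc 1 r, a k ^ 2 := by rw [sum_add_distrib]; linarith

lemma sum_sum_mul_le_sqrt_mul_sqrt {ι κ : Type*} (s : Finset ι) (t : ι → Finset κ)
    (f g : ι → κ → ℝ) :
    ∑ i ∈ s, ∑ j ∈ t i, f i j * g i j ≤
      √(∑ i ∈ s, ∑ j ∈ t i, f i j ^ 2) * √(∑ i ∈ s, ∑ j ∈ t i, g i j ^ 2) := by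
  simpa only [sum_sigma'] using
    Real.sum_mul_le_sqrt_mul_sqrt (s.sigma t) (fun x => f x.1 x.2) (fun x => g x.1 x.2)

noncomputable def pairCount (lam : ℕ → ℝ) (I : Set ℝ) (N : ℕ) : ℕ :=
  #{p ∈ Icc 1 N ×ˢ Icc 1 N | p.1 ≠ p.2 ∧ lam p.2 - lam p.1 ∈ I}

def HasPoissonPairCorrelations (lam : ℕ → ℝ) : Prop :=
  ∀ I : Set ℝ, I.OrdConnected → Bornology.IsBounded I →
    Tendsto (fun N : ℕ => (pairCount lam I N : ℝ) / N) atTop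
      (nhds (MeasureTheory.volume I).toReal)

lemma HasPoissonPairCorrelations.eventually_pairCount_Ioc_le {lam : ℕ → ℝ}
    (hppc : HasPoissonPairCorrelations lam) {x y δ : ℝ} (hxy : x ≤ y) (hδ : 0 < δ) :
    ∀ᶠ N : ℕ in atTop,
      (pairCount lam (Set.Ioc x y) (N + 1) : ℝ) ≤ (y - x + δ) * (N + 1) := by
  have h := hppc _ Set.ordConnected_Ioc (Metric.isBounded_Ioc x y)
  rw [Real.volume_Ioc, ENNReal.toReal_ofReal (sub_nonneg.2 hxy)] at h
  filter_upwards [(tendsto_add_atTop_nat 1).eventually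
    (h.eventually_lt_const (lt_add_of_pos_right _ hδ))] with N hN
  push_cast at hN
  exact ((div_lt_iff₀ (by positivity)).1 hN).le

noncomputable def gapWindows (g : ℕ → ℝ) (I : Set ℝ) (N : ℕ) : Finset (ℕ × ℕ) :=
  {ij ∈ Icc 1 N ×ˢ Icc 1 N | ij.1 < ij.2 ∧ ∑ i ∈ Icc ij.1 ij.2, g i ∈ I}

section Gaps

variable {lam g : ℕ → ℝ}

lemma sum_Icc_eq_sub (hgdef : ∀ n, g n = lam (n + 1) - lam n) {i j : ℕ} (hij : i ≤ j) :
    ∑ n ∈ Icc i j, g n = lam (j + 1) - lam i := by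
  simp only [hgdef, sum_Icc_sub hij]

lemma card_gapWindows_add_card_le_pairCount (hgdef : ∀ n, g n = lam (n + 1) - lam n)
    (I : Set ℝ) [DecidablePred (· ∈ I)] (N : ℕ) :
    #(gapWindows g I N) + #{n ∈ Icc 1 N | g n ∈ I} ≤ pairCount lam I (N + 1) := by
  have hinj₁ : Function.Injective fun ij : ℕ × ℕ => (ij.1, ij.2 + 1) := by
    intro a b hab; simp only [Prod.mk.injEq, add_left_inj] at hab; exact Prod.ext hab.1 hab.2
  have hinj₂ : Function.Injective fun n : ℕ => (n, n + 1) := by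
    intro a b hab; simpa using hab
  rw [← card_image_of_injective _ hinj₁, ← card_image_of_injective _ hinj₂,
    ← card_union_of_disjoint]
  · refine card_le_card (union_subset ?_ ?_) <;> intro p hp <;>
      simp only [mem_image, gapWindows, mem_filter, mem_product, mem_Icc] at hp <;>
      obtain ⟨q, hq, rfl⟩ := hp
    · simp only [mem_filter, mem_product, mem_Icc]
      rw [← sum_Icc_eq_sub hgdef hq.2.1.le]
      refine ⟨⟨⟨?_, ?_⟩, ?_, ?_⟩, ?_, hq.2.2⟩ <;> omega
    · simp only [mem_filter, mem_product, mem_Icc, ← hgdef]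
      refine ⟨⟨⟨?_, ?_⟩, ?_, ?_⟩, ?_, hq.2⟩ <;> omega
  · rw [disjoint_left]
    rintro _ hp hp'
    simp only [mem_image, gapWindows, mem_filter] at hp hp'
    obtain ⟨q, hq, rfl⟩ := hp
    obtain ⟨n, -, hn⟩ := hp'
    simp only [Prod.mk.injEq] at hn
    omega

lemma card_filter_mem_le_pairCount (hgdef : ∀ n, g n = lam (n + 1) - lam n) (I : Set ℝ)
    [DecidablePred (· ∈ I)] (N : ℕ) :
    #{n ∈ Icc 1 N | g n ∈ I} ≤ pairCount lam I (N + 1) :=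
  (Nat.le_add_left _ _).trans (card_gapWindows_add_card_le_pairCount hgdef I N)

lemma eventually_sq_card_filter_le_half_le (hgdef : ∀ n, g n = lam (n + 1) - lam n)
    (havg : Tendsto (fun N : ℕ => (∑ n ∈ Icc 1 N, g n) / N) atTop (nhds 1))
    (hppc : HasPoissonPairCorrelations lam) {ε h : ℝ} (hε : 0 ≤ ε) (hh : 0 < h)
    (hgap : ∀ n, 1 ≤ n → g n ≤ 3 / 2 + ε) :
    ∀ᶠ N : ℕ in atTop,
      (#{n ∈ Icc 1 N | g n ≤ 1 / 2} : ℝ) ^ 2 ≤ (2 * ε + 6 * h) * (N + 1) * N + N := by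
  have hsum : ∀ᶠ N : ℕ in atTop, (1 - h) * N ≤ ∑ n ∈ Icc 1 N, g n := by
    filter_upwards [havg.eventually_const_lt (sub_lt_self 1 hh), eventually_ge_atTop 1]
      with N hN hN1
    exact ((lt_div_iff₀ (by exact_mod_cast hN1)).1 hN).le
  have htail : ∀ᶠ N : ℕ in atTop, ∀ t ∈ range (⌊(1 + ε) / h⌋₊ + 1),
      (pairCount lam (Set.Ioc (1 / 2 + t * h) (3 / 2 + ε)) (N + 1) : ℝ) ≤
        (3 / 2 + ε - (1 / 2 + t * h) + h) * (N + 1) := by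
    refine (eventually_all_finset _).2 fun t ht => hppc.eventually_pairCount_Ioc_le ?_ hh
    have ht' : (t : ℝ) ≤ (1 + ε) / h :=
      (Nat.cast_le.2 (Nat.lt_succ_iff.1 (mem_range.1 ht))).trans (Nat.floor_le (by positivity))
    linarith [(le_div_iff₀ hh).1 ht']
  filter_upwards [hsum, htail] with N hsumN htailN
  have := sq_card_filter_le_half_le_of_le_sum (Icc 1 N) g hε hh (M := N + 1) (by positivity)
    (by simp) (fun n hn => hgap n (mem_Icc.1 hn).1) (by simpa using hsumN) ?_
  · simpa using this
  intro t ht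
  have htN := htailN t (mem_range.2 (Nat.lt_succ_iff.2 (Nat.le_floor ((le_div_iff₀ hh).2 ht))))
  calc (#{n ∈ Icc 1 N | 1 / 2 + t * h < g n} : ℝ)
      ≤ #{n ∈ Icc 1 N | g n ∈ Set.Ioc (1 / 2 + t * h) (3 / 2 + ε)} := by
        refine Nat.cast_le.2 (card_le_card (monotone_filter_right _ fun n hn hlt => ?_))
        exact ⟨hlt, hgap n (mem_Icc.1 hn).1⟩
    _ ≤ pairCount lam (Set.Ioc (1 / 2 + t * h) (3 / 2 + ε)) (N + 1) :=
        Nat.cast_le.2 (card_filter_mem_le_pairCount hgdef (Set.Ioc _ _) N)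
    _ ≤ (1 + ε + h - t * h) * (N + 1 : ℝ) := by linarith

lemma le_card_filter_add_card_filter_add_card_filter {ε : ℝ}
    (hgap : ∀ n, 1 ≤ n → g n ≤ 3 / 2 + ε) (N : ℕ) :
    N ≤ #{n ∈ Icc 1 N | g n ≤ 1 / 2} + #{n ∈ Icc 1 N | g n ∈ Set.Ioc (1 / 2) 1} +
      #{n ∈ Icc 1 N | g n ∈ Set.Ioc 1 (3 / 2 + ε)} := by
  calc N = #(Icc 1 N) := by simp
    _ ≤ #({n ∈ Icc 1 N | g n ≤ 1 / 2} ∪ {n ∈ Icc 1 N | g n ∈ Set.Ioc (1 / 2) 1} ∪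
        {n ∈ Icc 1 N | g n ∈ Set.Ioc 1 (3 / 2 + ε)}) := by
      refine card_le_card fun n hn => ?_
      have := hgap n (mem_Icc.1 hn).1
      simp only [mem_union, mem_filter, Set.mem_Ioc, hn, true_and]
      by_cases h₁ : g n ≤ 1 / 2
      · exact Or.inl (Or.inl h₁)
      by_cases h₂ : g n ≤ 1
      · exact Or.inl (Or.inr ⟨not_le.1 h₁, h₂⟩)
      · exact Or.inr ⟨not_le.1 h₂, this⟩
    _ ≤ _ := (card_union_le _ _).trans (Nat.add_le_add_right (card_union_le _ _) _)

lemma eventually_card_gapWindows_le (hgdef : ∀ n, g n = lam (n + 1) - lam n)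
    (havg : Tendsto (fun N : ℕ => (∑ n ∈ Icc 1 N, g n) / N) atTop (nhds 1))
    (hppc : HasPoissonPairCorrelations lam) {ε : ℝ} (hε₀ : 0 < ε) (hε : ε ≤ 1 / 1000)
    (hgap : ∀ n, 1 ≤ n → g n ≤ 3 / 2 + ε) :
    ∀ᶠ N : ℕ in atTop, (#(gapWindows g (Set.Ioc (1 / 2) 1) N) : ℝ) ≤ 2 * √ε * N := by
  filter_upwards [eventually_sq_card_filter_le_half_le hgdef havg hppc hε₀.le
      (show 0 < ε / 10 by positivity) hgap,
    hppc.eventually_pairCount_Ioc_le (show (1 / 2 : ℝ) ≤ 1 by norm_num)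
      (show 0 < ε / 10 by positivity),
    hppc.eventually_pairCount_Ioc_le (show (1 : ℝ) ≤ 3 / 2 + ε by linarith)
      (show 0 < ε / 10 by positivity),
    eventually_ge_atTop ⌈2 / ε⌉₊] with N hS_sq hmid hlarge hN
  have hcover : (N : ℝ) ≤ #{n ∈ Icc 1 N | g n ≤ 1 / 2} + #{n ∈ Icc 1 N | g n ∈ Set.Ioc (1 / 2) 1} +
      #{n ∈ Icc 1 N | g n ∈ Set.Ioc 1 (3 / 2 + ε)} := by
    exact_mod_cast le_card_filter_add_card_filter_add_card_filter hgap N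
  have hwin : (#(gapWindows g (Set.Ioc (1 / 2) 1) N) : ℝ) +
      #{n ∈ Icc 1 N | g n ∈ Set.Ioc (1 / 2) 1} ≤ pairCount lam (Set.Ioc (1 / 2) 1) (N + 1) := by
    exact_mod_cast card_gapWindows_add_card_le_pairCount hgdef _ N
  have hlargeGaps : (#{n ∈ Icc 1 N | g n ∈ Set.Ioc 1 (3 / 2 + ε)} : ℝ) ≤
      pairCount lam (Set.Ioc 1 (3 / 2 + ε)) (N + 1) := by
    exact_mod_cast card_filter_mem_le_pairCount hgdef (Set.Ioc _ _) N
  set S : ℝ := ((#{n ∈ Icc 1 N | g n ≤ 1 / 2} : ℕ) : ℝ)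
  set u := √ε
  have hu₀ : 0 < u := Real.sqrt_pos.2 hε₀
  have hu2 : u ^ 2 = ε := Real.sq_sqrt hε₀.le
  have hu_small : u ≤ 1 / 24 := by nlinarith
  have hεN : 2 ≤ ε * N := by
    have := (div_le_iff₀ hε₀).1 ((Nat.le_ceil _).trans (Nat.cast_le.2 hN))
    linarith
  have huN : 48 ≤ u * N := by nlinarith
  -- `S² ≤ 2.6 ε (N + 1) N + N ≤ (1.9 √ε N)²` as soon as `ε N ≥ 2`.
  have hS : S ≤ 19 / 10 * u * N := by
    have hS₀ : 0 ≤ S := Nat.cast_nonneg _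
    have hN₀ : (0 : ℝ) ≤ N := Nat.cast_nonneg N
    have : S ^ 2 ≤ (19 / 10 * u * N) ^ 2 := by
      rw [mul_pow, mul_pow, hu2]
      nlinarith [mul_nonneg hN₀ (show 0 ≤ 101 / 100 * ε * N - 1 - 26 / 10 * ε by linarith)]
    exact le_of_sq_le_sq this (by positivity)
  -- `#windows ≤ pairs − #medium ≤ S + #large + pairs − N`, and both pair counts are `≈ N/2`.
  nlinarith

end Gaps

section MaximalIntervals

variable {g : ℕ → ℝ} {N : ℕ} {pq pq' : ℕ × ℕ}

lemma bounds_of_mem_maximalIntervals (h : pq ∈ maximalIntervals g N) :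
    1 ≤ pq.1 ∧ pq.2 ≤ N := by
  simp only [maximalIntervals, mem_filter, mem_product, mem_Icc] at h
  exact ⟨h.1.1.1, h.1.2.2⟩

lemma fst_le_of_mem_maximalIntervals (h : pq ∈ maximalIntervals g N)
    (h' : pq' ∈ maximalIntervals g N) (hle : pq.1 ≤ pq'.2) : pq.1 ≤ pq'.1 := by
  simp only [maximalIntervals, mem_filter, mem_product, mem_Icc] at h h'
  obtain ⟨-, -, -, hleft, -⟩ := h
  obtain ⟨⟨⟨hp', -⟩, -⟩, -, hsmall', -⟩ := h'
  by_contra! hlt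
  have := hsmall' (pq.1 - 1) ⟨by omega, by omega⟩
  rcases hleft with h1 | h1
  · omega
  · linarith

lemma snd_le_of_mem_maximalIntervals (h : pq ∈ maximalIntervals g N)
    (h' : pq' ∈ maximalIntervals g N) (hle : pq'.1 ≤ pq.2) : pq'.2 ≤ pq.2 := by
  simp only [maximalIntervals, mem_filter, mem_product, mem_Icc] at h h'
  obtain ⟨-, -, -, -, hright⟩ := h
  obtain ⟨⟨-, -, hqN'⟩, -, hsmall', -⟩ := h'
  by_contra! hlt
  have := hsmall' (pq.2 + 1) ⟨by omega, by omega⟩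
  rcases hright with h1 | h1
  · omega
  · linarith

lemma eq_of_mem_maximalIntervals (h : pq ∈ maximalIntervals g N)
    (h' : pq' ∈ maximalIntervals g N) {m : ℕ} (hm : m ∈ Icc pq.1 pq.2)
    (hm' : m ∈ Icc pq'.1 pq'.2) : pq = pq' := by
  rw [mem_Icc] at hm hm'
  refine Prod.ext (le_antisymm ?_ ?_) (le_antisymm ?_ ?_)
  · exact fst_le_of_mem_maximalIntervals h h' (by omega)
  · exact fst_le_of_mem_maximalIntervals h' h (by omega)
  · exact snd_le_of_mem_maximalIntervals h' h (by omega)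
  · exact snd_le_of_mem_maximalIntervals h h' (by omega)

end MaximalIntervals

def block (e : ℕ → ℕ) (k : ℕ) : Finset ℕ := Icc (e (k - 1) + 1) (e k)

lemma card_block (e : ℕ → ℕ) (k : ℕ) : #(block e k) = e k - e (k - 1) := by
  simp only [block, Nat.card_Icc]
  omega

lemma card_filter_block_prod_le (e : ℕ → ℕ) (k : ℕ) (P : ℕ × ℕ → Prop) :
    #{nn ∈ block e k ×ˢ block e (k + 1) | P nn} ≤ (e k - e (k - 1)) * (e (k + 1) - e k) :=
  (card_filter_le _ _).trans_eq (by rw [card_product, card_block, card_block]; rfl)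

structure IsGapPartition (g : ℕ → ℝ) (p q r : ℕ) (e : ℕ → ℕ) : Prop where
  left_eq : e 0 = p - 1
  right_eq : e r = q
  lt_succ : ∀ k < r, e k < e (k + 1)
  sum_block_le : ∀ k, 1 ≤ k → k ≤ r → ∑ i ∈ block e k, g i ≤ 1 / 2

namespace IsGapPartition

variable {g : ℕ → ℝ} {p q r : ℕ} {e : ℕ → ℕ}

lemma monotoneOn (hP : IsGapPartition g p q r e) : MonotoneOn e (Set.Iic r) :=
  (strictMonoOn_Iic_of_lt_succ hP.lt_succ).monotoneOn

lemma Icc_subset (hP : IsGapPartition g p q r e) {i j : ℕ} (hij : i ≤ j) (hjr : j ≤ r) :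
    Icc (e i + 1) (e j) ⊆ Icc p q := by
  have h0 := hP.monotoneOn (Set.mem_Iic.2 (Nat.zero_le r)) (Set.mem_Iic.2 (hij.trans hjr))
    (Nat.zero_le i)
  have hr := hP.monotoneOn (Set.mem_Iic.2 hjr) (Set.mem_Iic.2 le_rfl) hjr
  rw [hP.left_eq] at h0
  rw [hP.right_eq] at hr
  exact Icc_subset_Icc (by omega) hr

lemma block_subset (hP : IsGapPartition g p q r e) {k : ℕ} (hkr : k ≤ r) :
    block e k ⊆ Icc p q :=
  hP.Icc_subset (k.sub_le 1) hkr

lemma eq_of_mem_block (hP : IsGapPartition g p q r e) {k k' n : ℕ} (hkr : k ≤ r)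
    (hkr' : k' ≤ r) (hn : n ∈ block e k) (hn' : n ∈ block e k') : k = k' := by
  simp only [block, mem_Icc] at hn hn'
  by_contra hne
  rcases Nat.lt_or_gt_of_ne hne with hlt | hlt
  · have := hP.monotoneOn (Set.mem_Iic.2 hkr) (Set.mem_Iic.2 (by omega))
      (by omega : k ≤ k' - 1)
    omega
  · have := hP.monotoneOn (Set.mem_Iic.2 hkr') (Set.mem_Iic.2 (by omega))
      (by omega : k' ≤ k - 1)
    omega

lemma sum_Icc_le_one (hP : IsGapPartition g p q r e) (hg : ∀ n ∈ Icc p q, 0 ≤ g n)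
    {k : ℕ} (hk : 1 ≤ k) (hkr : k + 1 ≤ r) {n n' : ℕ} (hn : n ∈ block e k)
    (hn' : n' ∈ block e (k + 1)) : ∑ i ∈ Icc n n', g i ≤ 1 := by
  have hmono {i j : ℕ} (hij : i ≤ j) (hjr : j ≤ r) : e i ≤ e j :=
    hP.monotoneOn (Set.mem_Iic.2 (hij.trans hjr)) (Set.mem_Iic.2 hjr) hij
  have hsplit : ∑ i ∈ Icc (e (k - 1) + 1) (e (k + 1)), g i =
      ∑ i ∈ block e k, g i + ∑ i ∈ block e (k + 1), g i := by
    simp only [block, Nat.add_sub_cancel, Icc_add_one_left_eq_Ioc]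
    exact (sum_Ioc_consecutive g (hmono (k.sub_le 1) (by omega)) (hmono k.le_succ hkr)).symm
  simp only [block, Nat.add_sub_cancel, mem_Icc] at hn hn'
  calc ∑ i ∈ Icc n n', g i ≤ ∑ i ∈ Icc (e (k - 1) + 1) (e (k + 1)), g i :=
        sum_le_sum_of_subset_of_nonneg (Icc_subset_Icc hn.1 hn'.2) fun i hi _ =>
          hg i (hP.Icc_subset (by omega) hkr hi)
    _ ≤ 1 := by
        rw [hsplit]
        linarith [hP.sum_block_le k hk (by omega), hP.sum_block_le (k + 1) (by omega) hkr]

lemma filter_block_prod_subset_gapWindows {N : ℕ} (hP : IsGapPartition g p q r e)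
    (hp : 1 ≤ p) (hqN : q ≤ N) (hg : ∀ n ∈ Icc p q, 0 ≤ g n) {k : ℕ} (hk : 1 ≤ k) (hkr : k + 1 ≤ r) :
    {nn ∈ block e k ×ˢ block e (k + 1) | 1 / 2 < ∑ i ∈ Icc nn.1 nn.2, g i} ⊆
      gapWindows g (Set.Ioc (1 / 2) 1) N := by
  intro nn hnn
  rw [mem_filter, mem_product] at hnn
  obtain ⟨⟨hn, hn'⟩, hclose⟩ := hnn
  have hmem := hP.block_subset (by omega) hn
  have hmem' := hP.block_subset hkr hn'
  simp only [block, Nat.add_sub_cancel, mem_Icc] at hn hn' hmem hmem'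
  simp only [gapWindows, mem_filter, mem_product, mem_Icc, Set.mem_Ioc]
  exact ⟨⟨⟨by omega, by omega⟩, by omega, by omega⟩, by omega, hclose,
    hP.sum_Icc_le_one hg hk hkr (by simpa [block] using hn) (by simpa [block] using hn')⟩

end IsGapPartition

section Blocks

variable {g : ℕ → ℝ} {N : ℕ}

lemma sum_card_filter_block_prod_le {r : ℕ × ℕ → ℕ} {e : ℕ × ℕ → ℕ → ℕ}
    (hg : ∀ n, 1 ≤ n → 0 ≤ g n)
    (hP : ∀ pq ∈ maximalIntervals g N, IsGapPartition g pq.1 pq.2 (r pq) (e pq)) :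
    ∑ pq ∈ maximalIntervals g N, ∑ k ∈ Icc 1 (r pq - 1),
        #{nn ∈ block (e pq) k ×ˢ block (e pq) (k + 1) | 1 / 2 < ∑ i ∈ Icc nn.1 nn.2, g i} ≤
      #(gapWindows g (Set.Ioc (1 / 2) 1) N) := by
  rw [sum_sigma']
  -- The first entry of a pair determines both its maximal interval and its block.
  refine (card_biUnion ?_).symm.le.trans (card_le_card (biUnion_subset.2 ?_))
  · rintro ⟨pq, k⟩ hx ⟨pq', k'⟩ hy hne
    simp only [coe_sigma, Set.mem_sigma_iff, mem_coe, mem_Icc] at hx hy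
    refine disjoint_left.2 fun nn h h' => hne ?_
    simp only [mem_filter, mem_product] at h h'
    obtain rfl := eq_of_mem_maximalIntervals hx.1 hy.1 ((hP _ hx.1).block_subset (by omega) h.1.1)
      ((hP _ hy.1).block_subset (by omega) h'.1.1)
    obtain rfl := (hP _ hx.1).eq_of_mem_block (by omega) (by omega) h.1.1 h'.1.1
    rfl
  · rintro ⟨pq, k⟩ hx
    simp only [mem_sigma, mem_Icc] at hx
    obtain ⟨hp, hqN⟩ := bounds_of_mem_maximalIntervals hx.1
    exact (hP pq hx.1).filter_block_prod_subset_gapWindows (k := k) hp hqN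
      (fun n hn => hg n (hp.trans (mem_Icc.1 hn).1)) hx.2.1 (by omega)

lemma sum_mul_le_sqrt_card_gapWindows_mul_sqrt {r : ℕ × ℕ → ℕ} {e : ℕ × ℕ → ℕ → ℕ}
    (hg : ∀ n, 1 ≤ n → 0 ≤ g n)
    (hP : ∀ pq ∈ maximalIntervals g N, IsGapPartition g pq.1 pq.2 (r pq) (e pq))
    (hclose : ∀ pq ∈ maximalIntervals g N, ∀ k, 1 ≤ k → k ≤ r pq - 1 →
      1 / 2 * ((min (e pq k - e pq (k - 1)) (e pq (k + 1) - e pq k) : ℕ) : ℝ) ^ 2 ≤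
        #{nn ∈ block (e pq) k ×ˢ block (e pq) (k + 1) | 1 / 2 < ∑ i ∈ Icc nn.1 nn.2, g i}) :
    ∑ pq ∈ maximalIntervals g N, ∑ k ∈ Icc 1 (r pq - 1),
        ((e pq k - e pq (k - 1) : ℕ) : ℝ) * ((e pq (k + 1) - e pq k : ℕ) : ℝ) ≤
      √(2 * #(gapWindows g (Set.Ioc (1 / 2) 1) N)) * √(2 * ∑ pq ∈ maximalIntervals g N,
        ∑ k ∈ Icc 1 (r pq), ((e pq k - e pq (k - 1) : ℕ) : ℝ) ^ 2) := by
  set len : ℕ × ℕ → ℕ → ℝ := fun pq k => ((e pq k - e pq (k - 1) : ℕ) : ℝ)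
  have hmin : ∑ pq ∈ maximalIntervals g N, ∑ k ∈ Icc 1 (r pq - 1),
      min (len pq k) (len pq (k + 1)) ^ 2 ≤ 2 * #(gapWindows g (Set.Ioc (1 / 2) 1) N) := by
    calc _ ≤ ∑ pq ∈ maximalIntervals g N, ∑ k ∈ Icc 1 (r pq - 1), 2 * (#{nn ∈ block (e pq) k ×ˢ
          block (e pq) (k + 1) | 1 / 2 < ∑ i ∈ Icc nn.1 nn.2, g i} : ℝ) := by
          refine sum_le_sum fun pq hpq => sum_le_sum fun k hk => ?_
          have h := hclose pq hpq k (mem_Icc.1 hk).1 (mem_Icc.1 hk).2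
          rw [Nat.cast_min] at h
          rw [← div_le_iff₀' two_pos, div_eq_inv_mul, ← one_div]
          exact h
      _ ≤ 2 * #(gapWindows g (Set.Ioc (1 / 2) 1) N) := by
          simp only [← mul_sum]
          gcongr
          exact_mod_cast sum_card_filter_block_prod_le hg hP
  have hmax : ∑ pq ∈ maximalIntervals g N, ∑ k ∈ Icc 1 (r pq - 1),
      max (len pq k) (len pq (k + 1)) ^ 2 ≤
        2 * ∑ pq ∈ maximalIntervals g N, ∑ k ∈ Icc 1 (r pq), len pq k ^ 2 := by
    rw [mul_sum]
    exact sum_le_sum fun pq _ => sum_sq_max_succ_le (len pq) (r pq)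
  calc _ = ∑ pq ∈ maximalIntervals g N, ∑ k ∈ Icc 1 (r pq - 1),
        min (len pq k) (len pq (k + 1)) * max (len pq k) (len pq (k + 1)) :=
        sum_congr rfl fun pq _ => sum_congr rfl fun k _ => (min_mul_max _ _).symm
    _ ≤ _ := sum_sum_mul_le_sqrt_mul_sqrt _ _ _ _
    _ ≤ _ := by gcongr

end Blocks

open scoped Classical in
/-- Let `(λ_n)` be strictly increasing with average gap `1` and Poisson pair correlations,
let `ε = 10⁻⁹`, and suppose `g n := λ_{n+1} − λ_n ≤ 3/2 + ε` for all `n ≥ 1`. Then for every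
`a ∈ (0, 1/2)`, for all sufficiently large `N` the following holds: whenever each
`I = (p,q) ∈ 𝓘^N` is partitioned into `r I` consecutive nonempty subintervals
`J_k^I = {e I (k-1) + 1, …, e I k}` (cut points `e I 0 = p − 1 < ⋯ < e I (r I) = q`) with
`summ(J_k^I) ≤ 1/2` for all `k`, and with
`#{(n,n') ∈ J_k^I × J_{k+1}^I : g n + ⋯ + g n' > 1/2} ≥ (1/2)·min(|J_k^I|, |J_{k+1}^I|)²`
for all `1 ≤ k ≤ r I − 1`, then
`∑_{I ∈ 𝓘^N} ∑_{k=1}^{r I − 1} PPC^{J_k^I, J_{k+1}^I}(0, a)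
  ≤ 2√2·ε^{1/4}·(∑_{I ∈ 𝓘^N} ∑_{k=1}^{r I} |J_k^I|²)^{1/2}·√N`. -/
theorem stmt_14 (lam : ℕ → ℝ) (g : ℕ → ℝ) (hgdef : ∀ n, g n = lam (n + 1) - lam n)
    (hmono : ∀ n, 1 ≤ n → lam n < lam (n + 1))
    (havg : Tendsto (fun N : ℕ => (∑ n ∈ Finset.Icc 1 N, g n) / N) atTop (nhds 1))
    (hppc : ∀ I : Set ℝ, I.OrdConnected → Bornology.IsBounded I →
      Tendsto (fun N : ℕ =>
          (((Finset.Icc 1 N ×ˢ Finset.Icc 1 N).filter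
            (fun p => p.1 ≠ p.2 ∧ lam p.2 - lam p.1 ∈ I)).card : ℝ) / N)
        atTop (nhds (MeasureTheory.volume I).toReal))
    (ε : ℝ) (hε : ε = 1 / 10 ^ 9)
    (hgap : ∀ n, 1 ≤ n → g n ≤ 3 / 2 + ε) :
    ∀ a : ℝ, 0 < a → a < 1 / 2 → ∀ᶠ N : ℕ in atTop,
      ∀ (r : ℕ × ℕ → ℕ) (e : ℕ × ℕ → ℕ → ℕ),
        (∀ pq ∈ maximalIntervals g N,
          1 ≤ r pq ∧ e pq 0 = pq.1 - 1 ∧ e pq (r pq) = pq.2 ∧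
          (∀ k < r pq, e pq k < e pq (k + 1)) ∧
          (∀ k, 1 ≤ k → k ≤ r pq →
            ∑ i ∈ Finset.Icc (e pq (k - 1) + 1) (e pq k), g i ≤ 1 / 2) ∧
          (∀ k, 1 ≤ k → k ≤ r pq - 1 →
            1 / 2 * ((min (e pq k - e pq (k - 1)) (e pq (k + 1) - e pq k) : ℕ) : ℝ) ^ 2 ≤
              (((Finset.Icc (e pq (k - 1) + 1) (e pq k) ×ˢ
                  Finset.Icc (e pq k + 1) (e pq (k + 1))).filter
                (fun nn => 1 / 2 < ∑ i ∈ Finset.Icc nn.1 nn.2, g i)).card : ℝ))) →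
        ∑ pq ∈ maximalIntervals g N, ∑ k ∈ Finset.Icc 1 (r pq - 1),
            (((Finset.Icc (e pq (k - 1) + 1) (e pq k) ×ˢ
                Finset.Icc (e pq k + 1) (e pq (k + 1))).filter
              (fun nn => ∑ i ∈ Finset.Icc nn.1 nn.2, g i < a)).card : ℝ)
          ≤ 2 * Real.sqrt 2 * ε ^ ((1 : ℝ) / 4) *
              Real.sqrt (∑ pq ∈ maximalIntervals g N, ∑ k ∈ Finset.Icc 1 (r pq),
                ((e pq k - e pq (k - 1) : ℕ) : ℝ) ^ 2) * Real.sqrt N := by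
  intro a _ _
  have hg (n : ℕ) (hn : 1 ≤ n) : 0 ≤ g n := by linarith [hgdef n, hmono n hn]
  filter_upwards [eventually_card_gapWindows_le hgdef havg hppc (by norm_num [hε])
    (by norm_num [hε]) hgap] with N hW r e hre
  have hP (pq) (h : pq ∈ maximalIntervals g N) : IsGapPartition g pq.1 pq.2 (r pq) (e pq) :=
    let ⟨_, h₀, hr, hlt, hsum, _⟩ := hre pq h; ⟨h₀, hr, hlt, hsum⟩
  have hroot : √(√ε) = ε ^ ((1 : ℝ) / 4) := by
    rw [Real.sqrt_eq_rpow, Real.sqrt_eq_rpow, ← Real.rpow_mul (by norm_num [hε])]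
    norm_num
  calc _ ≤ ∑ pq ∈ maximalIntervals g N, ∑ k ∈ Icc 1 (r pq - 1),
        ((e pq k - e pq (k - 1) : ℕ) : ℝ) * ((e pq (k + 1) - e pq k : ℕ) : ℝ) :=
        sum_le_sum fun pq _ => sum_le_sum fun k _ => by
          exact_mod_cast card_filter_block_prod_le (e pq) k _
    _ ≤ _ := sum_mul_le_sqrt_card_gapWindows_mul_sqrt hg hP fun pq h => (hre pq h).2.2.2.2.2
    _ ≤ √(2 * (2 * √ε * N)) * √(2 * ∑ pq ∈ maximalIntervals g N, ∑ k ∈ Icc 1 (r pq),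
          ((e pq k - e pq (k - 1) : ℕ) : ℝ) ^ 2) := by gcongr
    _ = _ := by
        rw [show 2 * (2 * √ε * N) = 2 ^ 2 * √ε * N by ring, Real.sqrt_mul (by positivity),
          Real.sqrt_mul (by positivity), Real.sqrt_mul zero_le_two, Real.sqrt_sq zero_le_two, hroot]
        ring
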